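/- Let A, B, C be Banach algebras over 𝕂, let α : A → C and β : B → C be continuous surjective algebra homomorphisms, and let D, γ, δ be the pullback data. Suppose β has a right inverse which is an algebra homomorphism (not necessarily continuous). Then δ has a right inverse which is an algebra homomorphism if and only if α has a right inverse which is an algebra homomorphism. -/

import Mathlib

/- The pullback of two continuous algebra homomorphisms `α : A → C` and `β : B → C`
between (possibly non-unital) Banach algebras, realised as a closed subalgebra of the
Banach-algebra direct sum `A × B` (whose norm is the maximum of the coordinate norms). -/

variable {𝕜 : Type*} [RCLike 𝕜]
variable {A B C : Type*}
  [NonUnitalNormedRing A] [NormedSpace 𝕜 A] [IsScalarTower 𝕜 A A] [SMulCommClass 𝕜 A A]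
  [CompleteSpace A]
  [NonUnitalNormedRing B] [NormedSpace 𝕜 B] [IsScalarTower 𝕜 B B] [SMulCommClass 𝕜 B B]
  [CompleteSpace B]
  [NonUnitalNormedRing C] [NormedSpace 𝕜 C] [IsScalarTower 𝕜 C C] [SMulCommClass 𝕜 C C]
  [CompleteSpace C]

/-- The pullback `D = {(a,b) ∈ A ⊕ B : α(a) = β(b)}`. -/
def pullback (α : A →ₙₐ[𝕜] C) (β : B →ₙₐ[𝕜] C) : NonUnitalSubalgebra 𝕜 (A × B) where
  carrier := {p | α p.1 = β p.2}
  add_mem' := by intro p q hp hq; simp only [Set.mem_setOf_eq] at *; simp [map_add, hp, hq]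
  zero_mem' := by simp
  mul_mem' := by intro p q hp hq; simp only [Set.mem_setOf_eq] at *; simp [map_mul, hp, hq]
  smul_mem' := by intro c p hp; simp only [Set.mem_setOf_eq] at *; simp [map_smul, hp]


/-! A splitting `σ` of `α` gives the splitting `b ↦ (σ (β b), b)` of `δ`. Conversely, since
`α ∘ γ = β ∘ δ`, splittings `τ` of `δ` and `ρ` of `β` give the splitting `γ ∘ τ ∘ ρ` of `α`. -/

theorem Function.RightInverse.of_comp_eq_comp {P X Y Z : Type*} {α : X → Z} {β : Y → Z}
    {γ : P → X} {δ : P → Y} {ρ : Z → Y} {τ : Y → P} (hρ : Function.RightInverse ρ β)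
    (hcomm : α ∘ γ = β ∘ δ) (hτ : Function.RightInverse τ δ) :
    Function.RightInverse (γ ∘ τ ∘ ρ) α := fun z => by
  change (α ∘ γ) (τ (ρ z)) = z
  rw [hcomm, Function.comp_apply, hτ, hρ]

namespace pullback

variable (α : A →ₙₐ[𝕜] C) (β : B →ₙₐ[𝕜] C)

def fst : pullback α β →ₙₐ[𝕜] A :=
  (NonUnitalAlgHom.fst 𝕜 A B).comp (NonUnitalSubalgebraClass.subtype (pullback α β))

def snd : pullback α β →ₙₐ[𝕜] B :=
  (NonUnitalAlgHom.snd 𝕜 A B).comp (NonUnitalSubalgebraClass.subtype (pullback α β))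

variable {α β} in
def lift {X : Type*} [NonUnitalNonAssocSemiring X] [Module 𝕜 X] (f : X →ₙₐ[𝕜] A)
    (g : X →ₙₐ[𝕜] B) (h : α.comp f = β.comp g) : X →ₙₐ[𝕜] pullback α β :=
  NonUnitalAlgHom.codRestrict (f.prod g) (pullback α β) fun x => NonUnitalAlgHom.congr_fun h x

end pullback

theorem pullback.comp_fst_eq_comp_snd {𝕂 E F G : Type*} [RCLike 𝕂]
    [NonUnitalNormedRing E] [NormedSpace 𝕂 E] [NonUnitalNormedRing F] [NormedSpace 𝕂 F]
    [NonUnitalNormedRing G] [NormedSpace 𝕂 G] (α : E →ₙₐ[𝕂] G) (β : F →ₙₐ[𝕂] G) :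
    α ∘ pullback.fst α β = β ∘ pullback.snd α β :=
  funext fun p => p.2

theorem pullback_splits_algebraically_iff_general (α : A →ₙₐ[𝕜] C) (β : B →ₙₐ[𝕜] C)
    (hβsplit : ∃ ρ : C →ₙₐ[𝕜] B, ∀ c, β (ρ c) = c) :
    (∃ τ : B →ₙₐ[𝕜] pullback α β, ∀ b, ((τ b : A × B)).2 = b) ↔
    (∃ σ : C →ₙₐ[𝕜] A, ∀ c, α (σ c) = c) := by
  obtain ⟨ρ, hρ⟩ := hβsplit
  constructor
  · rintro ⟨τ, hτ⟩
    exact ⟨(pullback.fst α β).comp (τ.comp ρ),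
      Function.RightInverse.of_comp_eq_comp hρ (pullback.comp_fst_eq_comp_snd α β) hτ⟩
  · rintro ⟨σ, hσ⟩
    refine ⟨pullback.lift (σ.comp β) (NonUnitalAlgHom.id 𝕜 B) ?_, fun b => rfl⟩
    ext b
    exact hσ (β b)

/-- Suppose `β` has a right inverse which is an algebra homomorphism (not necessarily
continuous). Then the restricted coordinate projection `δ : D → B, (a,b) ↦ b` has a right
inverse which is an algebra homomorphism if and only if `α` does. -/
theorem pullback_splits_algebraically_iff (α : A →ₙₐ[𝕜] C) (β : B →ₙₐ[𝕜] C)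
    (hα : Continuous α) (hβ : Continuous β)
    (hαsurj : Function.Surjective α) (hβsurj : Function.Surjective β)
    (hβsplit : ∃ ρ : C →ₙₐ[𝕜] B, ∀ c, β (ρ c) = c) :
    (∃ τ : B →ₙₐ[𝕜] pullback α β, ∀ b, ((τ b : A × B)).2 = b) ↔
    (∃ σ : C →ₙₐ[𝕜] A, ∀ c, α (σ c) = c) :=
  pullback_splits_algebraically_iff_general α β hβsplit
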